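/- arXiv:1712.02581 — 8 statements merged into one kernel-verified Lean document; each statement's English description precedes it below -/
import Mathlib

section
/- Suppose ξ : I → ℝ is differentiable and satisfies both the functional equation ξ(g(x)) = g'(x)·ξ(x) and the ODE ξ'(x) = K(x)·ξ(x), where K(x) = α(x) − g'(x)·α(g(x)) − β'(x)/β(x). Then for every x ∈ I, ξ(x)·( K(g(x))·g'(x)² − g''(x) − K(x)·g'(x) ) = 0. In particular, if ξ(x₀) ≠ 0 at some point where ξ is nonvanishing on a neighborhood, the compatibility condition K(g(x))·g'(x)² = g''(x) + K(x)·g'(x) holds there. -/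
/-- If `ξ` satisfies both the functional equation `ξ(g(x)) = g'(x) ξ(x)` and the ODE
`ξ' = K ξ` with `K = α − g'·(α∘g) − β'/β`, then
`ξ(x) (K(g(x)) g'(x)² − g''(x) − K(x) g'(x)) = 0` on `I`; in particular where `ξ ≠ 0`
the compatibility condition `K(g(x)) g'(x)² = g''(x) + K(x) g'(x)` holds. -/
theorem stmt_3 (I : Set ℝ) (hI : IsOpen I) (α β g ξ K : ℝ → ℝ)
    (hβ : ∀ x ∈ I, β x ≠ 0) (hg : ∀ x ∈ I, g x < x) (hgI : ∀ x ∈ I, g x ∈ I)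
    (hαdiff : Differentiable ℝ α) (hβdiff : Differentiable ℝ β)
    (hgdiff : Differentiable ℝ g) (hgdiff2 : Differentiable ℝ (deriv g))
    (hξdiff : Differentiable ℝ ξ)
    (hK : ∀ x ∈ I, K x = α x - deriv g x * α (g x) - deriv β x / β x)
    (hfe : ∀ x ∈ I, ξ (g x) = deriv g x * ξ x)
    (hode : ∀ x ∈ I, deriv ξ x = K x * ξ x) :
    (∀ x ∈ I,
        ξ x * (K (g x) * (deriv g x) ^ 2 - deriv (deriv g) x - K x * deriv g x) = 0) ∧
      (∀ x ∈ I, ξ x ≠ 0 →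
        K (g x) * (deriv g x) ^ 2 = deriv (deriv g) x + K x * deriv g x) := by
  have main : ∀ x ∈ I,
      ξ x * (K (g x) * (deriv g x) ^ 2 - deriv (deriv g) x - K x * deriv g x) = 0 := by
    intro x hx
    have hev : (fun y => ξ (g y)) =ᶠ[nhds x] fun y => deriv g y * ξ y := by
      filter_upwards [hI.mem_nhds hx] with y hy using hfe y hy
    have hderiv_eq : deriv (fun y => ξ (g y)) x = deriv (fun y => deriv g y * ξ y) x :=
      hev.deriv_eq
    have hL : deriv (fun y => ξ (g y)) x = deriv ξ (g x) * deriv g x := by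
      rw [← Function.comp_def, deriv_comp x (hξdiff _) (hgdiff _)]
    have hR : deriv (fun y => deriv g y * ξ y) x
        = deriv (deriv g) x * ξ x + deriv g x * deriv ξ x :=
      deriv_mul (hgdiff2 x) (hξdiff x)
    have h1 : deriv ξ (g x) = K (g x) * ξ (g x) := hode _ (hgI x hx)
    have h2 : ξ (g x) = deriv g x * ξ x := hfe x hx
    have h3 : deriv ξ x = K x * ξ x := hode x hx
    rw [hL, hR, h1, h2, h3] at hderiv_eq
    ring_nf
    ring_nf at hderiv_eq
    linarith
  refine ⟨main, fun x hx hne => ?_⟩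
  have := main x hx
  have h0 : K (g x) * (deriv g x) ^ 2 - deriv (deriv g) x - K x * deriv g x = 0 := by
    rcases mul_eq_zero.mp this with h | h
    · exact absurd h hne
    · exact h
  linarith
end

section
/- For constants A ≠ 0 and B ∈ (0,1), the pair y(x) = A·x^a, x_-(x) = B·x (for x > 0) satisfies the DODS ẏ = C₁·(y − y_-)/(x − x_-), x − x_- = (y − y_-)^{1/a} (with a ≠ 0, a ≠ 1) if and only if a = C₁·(1 − B^a)/(1 − B) and 1 − B = C₂·(A·(1 − B^a))^{1/a} where C₂ = 1 (in the normalized form x − x_- = (y − y_-)^{1/a}). -/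
lemma aux_rpow (c x a : ℝ) (ha : a ≠ 0) (hx : 0 < x) :
    (c * x ^ a) ^ (1 / a) = c ^ (1 / a) * x := by
  rcases lt_trichotomy c 0 with hc | hc | hc
  · have hxa : (0:ℝ) < x ^ a := Real.rpow_pos_of_pos hx a
    have hneg : c * x ^ a < 0 := mul_neg_of_neg_of_pos hc hxa
    rw [Real.rpow_def_of_neg hneg, Real.rpow_def_of_neg hc,
      Real.log_mul hc.ne hxa.ne', Real.log_rpow hx]
    rw [add_mul, Real.exp_add]
    have : Real.exp (a * Real.log x * (1 / a)) = x := by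
      rw [mul_comm a (Real.log x), mul_assoc, mul_one_div, div_self ha, mul_one,
        Real.exp_log hx]
    rw [this]; ring
  · subst hc
    rw [zero_mul, Real.zero_rpow (one_div_ne_zero ha), zero_mul]
  · rw [Real.mul_rpow hc.le (Real.rpow_pos_of_pos hx a).le, ← Real.rpow_mul hx.le,
      mul_one_div, div_self ha, Real.rpow_one]

/-- Invariant solutions for A_{3,2}^a under X₃: `y(x) = A x^a`, `x₋(x) = B x` satisfies
`ẏ = C₁ (y−y₋)/(x−x₋)`, `x − x₋ = (y−y₋)^(1/a)` (for all x > 0) iff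
`a = C₁ (1−B^a)/(1−B)` and `1 − B = (A (1−B^a))^(1/a)` (i.e. with C₂ = 1). -/
theorem stmt_10 (a A B C₁ : ℝ) (hA : 0 < A) (hB : 0 < B) (hB1 : B < 1)
    (ha0 : a ≠ 0) (ha1 : a ≠ 1)
    (y xm : ℝ → ℝ) (hy : y = fun x => A * x ^ a) (hxm : xm = fun x => B * x) :
    (∀ x : ℝ, 0 < x →
        deriv y x = C₁ * (y x - y (xm x)) / (x - xm x) ∧
        x - xm x = (y x - y (xm x)) ^ (1 / a)) ↔
      (a = C₁ * (1 - B ^ a) / (1 - B) ∧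
        1 - B = (A * (1 - B ^ a)) ^ (1 / a)) := by
  subst hy hxm
  have hBne : (1:ℝ) - B ≠ 0 := by linarith
  have hderiv : ∀ x : ℝ, 0 < x →
      deriv (fun x => A * x ^ a) x = A * (a * x ^ (a - 1)) := fun x hx =>
    ((Real.hasDerivAt_rpow_const (Or.inl hx.ne')).const_mul A).deriv
  constructor
  · intro h
    obtain ⟨h1, h2⟩ := h 1 one_pos
    simp only [hderiv 1 one_pos, Real.one_rpow, mul_one, Real.mul_rpow hB.le zero_le_one,
      Real.one_rpow] at h1 h2
    constructor
    · rw [eq_div_iff hBne] at h1 ⊢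
      nlinarith [h1]
    · have : A - A * B ^ a = A * (1 - B ^ a) := by ring
      rw [this] at h2
      exact h2
  · rintro ⟨hC, hC2⟩ x hx
    have hBxa : (B * x) ^ a = B ^ a * x ^ a := Real.mul_rpow hB.le hx.le
    have hxa1 : x ^ (a - 1) = x ^ a / x := by
      rw [Real.rpow_sub hx, Real.rpow_one]
    constructor
    · rw [hderiv x hx]
      have haeq : a * (1 - B) = C₁ * (1 - B ^ a) := by
        field_simp at hC; linarith [hC]
      have hxB : x - B * x ≠ 0 := by
        have h : x - B * x = (1 - B) * x := by ring
        rw [h]; exact mul_ne_zero hBne hx.ne'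
      rw [eq_div_iff hxB]
      simp only [hBxa, hxa1]
      field_simp
      linear_combination haeq
    · have : A * x ^ a - A * ((B * x) ^ a) = (A * (1 - B ^ a)) * x ^ a := by
        rw [hBxa]; ring
      rw [this, aux_rpow _ _ _ ha0 hx, ← hC2]; ring
end

section
/- For constants A ≠ 0 and B with 0 < B < 1 (ensuring 0 < x_- < x), the pair y(x) = A·√x, x_-(x) = B·x (for x > 0) satisfies the DODS ẏ = (y − y_-)/(x − x_-) + C₁/y, x − x_- = C₂·y·y_- if and only if A/2 = A/(1 + √B) + C₁/A and 1/√B − √B = C₂·A². -/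
/-- Invariant solutions for A_{3,8} under X₂: `y(x) = A √x`, `x₋(x) = B x` satisfies
`ẏ = (y−y₋)/(x−x₋) + C₁/y`, `x − x₋ = C₂ y y₋` (for x > 0) iff
`A/2 = A/(1+√B) + C₁/A` and `1/√B − √B = C₂ A²`. -/
theorem stmt_12 (A B C₁ C₂ : ℝ) (hA : A ≠ 0) (hB : 0 < B) (hB1 : B < 1) (hC₂ : C₂ ≠ 0)
    (y xm : ℝ → ℝ) (hy : y = fun x => A * Real.sqrt x) (hxm : xm = fun x => B * x) :
    (∀ x : ℝ, 0 < x →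
        deriv y x = (y x - y (xm x)) / (x - xm x) + C₁ / y x ∧
        x - xm x = C₂ * y x * y (xm x)) ↔
      (A / 2 = A / (1 + Real.sqrt B) + C₁ / A ∧
        1 / Real.sqrt B - Real.sqrt B = C₂ * A ^ 2) := by
  subst hy hxm
  have hs : 0 < Real.sqrt B := Real.sqrt_pos.mpr hB
  have hs2 : Real.sqrt B ^ 2 = B := Real.sq_sqrt hB.le
  have hs1 : Real.sqrt B < 1 := by
    have := Real.sqrt_lt_sqrt hB.le hB1
    simpa using this
  set s := Real.sqrt B with hsdef
  have h1s : (0:ℝ) < 1 + s := by linarith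
  have h1s' : (0:ℝ) < 1 - s := by linarith
  have key : ∀ x : ℝ, 0 < x →
      ((deriv (fun x => A * Real.sqrt x) x =
          (A * Real.sqrt x - A * Real.sqrt (B * x)) / (x - B * x) + C₁ / (A * Real.sqrt x)) ↔
        (A / 2 = A / (1 + s) + C₁ / A)) ∧
      ((x - B * x = C₂ * (A * Real.sqrt x) * (A * Real.sqrt (B * x))) ↔
        (1 / s - s = C₂ * A ^ 2)) := by
    intro x hx
    have ht : 0 < Real.sqrt x := Real.sqrt_pos.mpr hx
    have ht2 : Real.sqrt x ^ 2 = x := Real.sq_sqrt hx.le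
    set t := Real.sqrt x with htdef
    have hBx : Real.sqrt (B * x) = s * t := Real.sqrt_mul hB.le x
    have hderiv : deriv (fun x => A * Real.sqrt x) x = A * (1 / (2 * t)) :=
      ((Real.hasDerivAt_sqrt hx.ne').const_mul A).deriv
    have hden : (0:ℝ) < t ^ 2 - s ^ 2 * t ^ 2 := by nlinarith
    rw [hderiv, hBx, ← ht2, ← hs2]
    constructor
    · have e1 : A * (1 / (2 * t)) = (A / 2) / t := by
        field_simp
      have e2 : (A * t - A * (s * t)) / (t ^ 2 - s ^ 2 * t ^ 2) + C₁ / (A * t)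
          = (A / (1 + s) + C₁ / A) / t := by
        rw [div_add_div _ _ h1s.ne' hA, div_div]
        rw [div_add_div _ _ hden.ne'
          (mul_ne_zero hA ht.ne')]
        rw [div_eq_div_iff (mul_ne_zero hden.ne' (mul_ne_zero hA ht.ne'))
          (by positivity : (1 + s) * A * t ≠ 0)]
        ring
      rw [e1, e2, div_left_inj' ht.ne']
    · have e3 : C₂ * (A * t) * (A * (s * t)) = (C₂ * A ^ 2 * s) * t ^ 2 / 1 := by ring
      have e4 : t ^ 2 - s ^ 2 * t ^ 2 = ((1 - s ^ 2) / s) * t ^ 2 * s / 1 := by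
        field_simp
      have e5 : (1:ℝ) / s - s = ((1 - s ^ 2) / s) := by
        field_simp
      rw [e3, e4, e5]
      constructor
      · intro h
        have h' : (1 - s ^ 2) / s * t ^ 2 * s = C₂ * A ^ 2 * s * t ^ 2 := by
          field_simp at h ⊢; linarith
        have h'' : (1 - s ^ 2) / s * (t ^ 2 * s) = C₂ * A ^ 2 * (t ^ 2 * s) := by
          ring_nf; ring_nf at h'; linarith
        exact mul_right_cancel₀ (by positivity) h''
      · intro h
        rw [h]; ring
  constructor
  · intro h
    exact ⟨((key 1 one_pos).1).mp (h 1 one_pos).1, ((key 1 one_pos).2).mp (h 1 one_pos).2⟩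
  · intro h x hx
    exact ⟨((key x hx).1).mpr h.1, ((key x hx).2).mpr h.2⟩
end

section
/- The quantities I₁ = (x − x_-)/(y·y_-) and I₂ = y·(ẏ − (y − y_-)/(x − x_-)) are invariant under the flows of the three vector fields X₁ = ∂_x, X₂ = 2x∂_x + y∂_y, X₃ = x²∂_x + x·y·∂_y, i.e., each prolonged vector field annihilates I₁ and I₂, where the prolongation acts on (x, y, x_-, y_-, ẏ) with ζ = D(η) − ẏ·D(ξ) and the shifted coefficients evaluated at (x_-, y_-). -/
private lemma fderiv_I1_apply (q v : ℝ × ℝ × ℝ × ℝ × ℝ)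
    (hy : q.2.1 ≠ 0) (hym : q.2.2.2.1 ≠ 0) :
    fderiv ℝ (fun p : ℝ × ℝ × ℝ × ℝ × ℝ => (p.1 - p.2.2.1) / (p.2.1 * p.2.2.2.1)) q v
    = ((v.1 - v.2.2.1) * (q.2.1 * q.2.2.2.1)
        - (q.1 - q.2.2.1) * (v.2.1 * q.2.2.2.1 + q.2.1 * v.2.2.2.1))
      / (q.2.1 * q.2.2.2.1) ^ 2 := by
  have hid := hasFDerivAt_id (𝕜 := ℝ) q
  have h1 := hid.fst
  have h2 := hid.snd.fst
  have h3 := hid.snd.snd.fst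
  have h4 := hid.snd.snd.snd.fst
  have hden : q.2.1 * q.2.2.2.1 ≠ 0 := mul_ne_zero hy hym
  have hinv := (hasDerivAt_inv hden).comp_hasFDerivAt q (h2.mul h4)
  have H := ((h1.sub h3).mul hinv).fderiv
  simp only [Function.comp_def, id_eq, Pi.mul_def, Pi.sub_def] at H
  simp only [div_eq_mul_inv]
  rw [H]
  simp [smul_eq_mul]
  field_simp
  ring

private lemma fderiv_I2_apply (q v : ℝ × ℝ × ℝ × ℝ × ℝ)
    (hA : q.1 - q.2.2.1 ≠ 0) :
    fderiv ℝ (fun p : ℝ × ℝ × ℝ × ℝ × ℝ =>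
      p.2.1 * (p.2.2.2.2 - (p.2.1 - p.2.2.2.1) / (p.1 - p.2.2.1))) q v
    = v.2.1 * (q.2.2.2.2 - (q.2.1 - q.2.2.2.1) / (q.1 - q.2.2.1))
      + q.2.1 * (v.2.2.2.2
          - ((v.2.1 - v.2.2.2.1) * (q.1 - q.2.2.1)
              - (q.2.1 - q.2.2.2.1) * (v.1 - v.2.2.1)) / (q.1 - q.2.2.1) ^ 2) := by
  have hid := hasFDerivAt_id (𝕜 := ℝ) q
  have h1 := hid.fst
  have h2 := hid.snd.fst
  have h3 := hid.snd.snd.fst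
  have h4 := hid.snd.snd.snd.fst
  have h5 := hid.snd.snd.snd.snd
  have hinv := (hasDerivAt_inv hA).comp_hasFDerivAt q (h1.sub h3)
  have H := (h2.mul (h5.sub ((h2.sub h4).mul hinv))).fderiv
  simp only [Function.comp_def, id_eq, Pi.mul_def, Pi.sub_def] at H
  simp only [div_eq_mul_inv]
  rw [H]
  simp [smul_eq_mul]
  field_simp
  ring

/-- The invariants `I₁ = (x − x₋)/(y y₋)` and `I₂ = y (ẏ − (y−y₋)/(x−x₋))` are
annihilated by the prolongations of `X₁ = ∂_x`, `X₂ = 2x∂_x + y∂_y`,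
`X₃ = x²∂_x + xy∂_y` to the jet space with coordinates `(x, y, x₋, y₋, ẏ)`,
where the prolonged coefficient of `∂_ẏ` is `ζ = D(η) − ẏ D(ξ)` and the shifted
coefficients are evaluated at `(x₋, y₋)`. -/
theorem stmt_14
    (I₁ I₂ : ℝ × ℝ × ℝ × ℝ × ℝ → ℝ)
    (hI₁ : I₁ = fun q => (q.1 - q.2.2.1) / (q.2.1 * q.2.2.2.1))
    (hI₂ : I₂ = fun q =>
      q.2.1 * (q.2.2.2.2 - (q.2.1 - q.2.2.2.1) / (q.1 - q.2.2.1)))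
    (V₁ V₂ V₃ : ℝ × ℝ × ℝ × ℝ × ℝ → ℝ × ℝ × ℝ × ℝ × ℝ)
    -- prolongation of X₁ = ∂_x :  ξ = 1, η = 0, ζ = 0
    (hV₁ : V₁ = fun _ => ((1 : ℝ), (0 : ℝ), (1 : ℝ), (0 : ℝ), (0 : ℝ)))
    -- prolongation of X₂ = 2x∂_x + y∂_y :  ζ = ẏ − 2ẏ = −ẏ
    (hV₂ : V₂ = fun q =>
      (2 * q.1, q.2.1, 2 * q.2.2.1, q.2.2.2.1, -q.2.2.2.2))
    -- prolongation of X₃ = x²∂_x + xy∂_y :  ζ = y + x ẏ − 2x ẏ = y − x ẏ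
    (hV₃ : V₃ = fun q =>
      (q.1 ^ 2, q.1 * q.2.1, q.2.2.1 ^ 2, q.2.2.1 * q.2.2.2.1,
        q.2.1 - q.1 * q.2.2.2.2)) :
    ∀ q : ℝ × ℝ × ℝ × ℝ × ℝ,
      q.2.1 ≠ 0 → q.2.2.2.1 ≠ 0 → q.1 ≠ q.2.2.1 →
      fderiv ℝ I₁ q (V₁ q) = 0 ∧ fderiv ℝ I₁ q (V₂ q) = 0 ∧
        fderiv ℝ I₁ q (V₃ q) = 0 ∧
      fderiv ℝ I₂ q (V₁ q) = 0 ∧ fderiv ℝ I₂ q (V₂ q) = 0 ∧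
        fderiv ℝ I₂ q (V₃ q) = 0 := by
  intro q hy hym hxx
  have hA : q.1 - q.2.2.1 ≠ 0 := sub_ne_zero_of_ne hxx
  subst hI₁ hI₂ hV₁ hV₂ hV₃
  refine ⟨?_, ?_, ?_, ?_, ?_, ?_⟩
  · rw [fderiv_I1_apply _ _ hy hym]; field_simp; ring
  · rw [fderiv_I1_apply _ _ hy hym]; field_simp; ring
  · rw [fderiv_I1_apply _ _ hy hym]; field_simp; ring
  · rw [fderiv_I2_apply _ _ hA]; field_simp; ring
  · rw [fderiv_I2_apply _ _ hA]; field_simp; ring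
  · rw [fderiv_I2_apply _ _ hA]; field_simp; ring
end

section
/- The quantities I₁ = x, I₂ = x_-, I₃ = ẏ/(y − y_-) are each annihilated by the prolongations of X₁ = ∂_y and X₂ = y·∂_y; conversely, any smooth function F(x, y, x_-, y_-, ẏ) annihilated by both prolonged vector fields (on an open set where y ≠ y_-) is locally a function of I₁, I₂, I₃ alone. -/
private lemma key15 (ε : ℝ) (hε : ε = 1 ∨ ε = -1)
    (F : ℝ × ℝ × ℝ × ℝ × ℝ → ℝ) (hF : Differentiable ℝ F)
    (h1 : ∀ q : ℝ × ℝ × ℝ × ℝ × ℝ, q.2.1 ≠ q.2.2.2.1 →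
      fderiv ℝ F q ((0 : ℝ), (1 : ℝ), (0 : ℝ), (1 : ℝ), (0 : ℝ)) = 0)
    (h2 : ∀ q : ℝ × ℝ × ℝ × ℝ × ℝ, q.2.1 ≠ q.2.2.2.1 →
      fderiv ℝ F q ((0 : ℝ), q.2.1, (0 : ℝ), q.2.2.2.1, q.2.2.2.2) = 0)
    (p : ℝ × ℝ × ℝ × ℝ × ℝ) (hp : 0 < ε * (p.2.1 - p.2.2.2.1)) :
    F p = F (p.1, ε, p.2.2.1, 0, ε * (p.2.2.2.2 / (p.2.1 - p.2.2.2.1))) := by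
  set d : ℝ := p.2.1 - p.2.2.2.1 with hdd
  have hd : d ≠ 0 := by
    intro h; rw [h, mul_zero] at hp; exact lt_irrefl 0 hp
  have hε2 : ε * ε = 1 := by rcases hε with h | h <;> simp [h]
  have hεne : ε ≠ 0 := by rcases hε with h | h <;> simp [h]
  set c : ℝ := p.2.2.2.2 / d with hcc
  -- Step 1: translate y, y₋ down by y₋
  have hγ : ∀ t : ℝ, HasDerivAt
      (fun t : ℝ => F (p.1, p.2.1 + t, p.2.2.1, p.2.2.2.1 + t, p.2.2.2.2)) 0 t := by
    intro t
    have hc : HasDerivAt (fun t : ℝ =>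
        ((p.1, p.2.1 + t, p.2.2.1, p.2.2.2.1 + t, p.2.2.2.2) : ℝ × ℝ × ℝ × ℝ × ℝ))
        (((0 : ℝ), (1 : ℝ), (0 : ℝ), (1 : ℝ), (0 : ℝ))) t := by
      exact (hasDerivAt_const t p.1).prodMk (((hasDerivAt_id t).const_add p.2.1).prodMk
        ((hasDerivAt_const t p.2.2.1).prodMk (((hasDerivAt_id t).const_add p.2.2.2.1).prodMk
          (hasDerivAt_const t p.2.2.2.2))))
    have hne : (p.2.1 + t) ≠ (p.2.2.2.1 + t) := by
      intro h; exact hd (by rw [hdd, sub_eq_zero]; exact add_right_cancel h)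
    have := (hF _).hasFDerivAt.comp_hasDerivAt t hc
    rw [h1 _ hne] at this
    exact this
  have step1 : F p = F (p.1, d, p.2.2.1, 0, p.2.2.2.2) := by
    have hconst := is_const_of_deriv_eq_zero
      (f := fun t : ℝ => F (p.1, p.2.1 + t, p.2.2.1, p.2.2.2.1 + t, p.2.2.2.2))
      (fun t => (hγ t).differentiableAt) (fun t => (hγ t).deriv)
    have := hconst 0 (-p.2.2.2.1)
    simpa [sub_eq_add_neg, hdd] using this
  -- Step 2: scale along exp flow of V₂
  have hδ : ∀ t : ℝ, HasDerivAt
      (fun t : ℝ => F (p.1, ε * Real.exp t, p.2.2.1, 0, ε * Real.exp t * c)) 0 t := by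
    intro t
    have hc : HasDerivAt (fun t : ℝ =>
        ((p.1, ε * Real.exp t, p.2.2.1, (0 : ℝ), ε * Real.exp t * c) : ℝ × ℝ × ℝ × ℝ × ℝ))
        (((0 : ℝ), ε * Real.exp t, (0 : ℝ), (0 : ℝ), ε * Real.exp t * c)) t := by
      exact (hasDerivAt_const t p.1).prodMk (((Real.hasDerivAt_exp t).const_mul ε).prodMk
        ((hasDerivAt_const t p.2.2.1).prodMk ((hasDerivAt_const t (0 : ℝ)).prodMk
          (((Real.hasDerivAt_exp t).const_mul ε).mul_const c))))
    have hne : (ε * Real.exp t) ≠ (0 : ℝ) :=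
      mul_ne_zero hεne (Real.exp_ne_zero t)
    have := (hF _).hasFDerivAt.comp_hasDerivAt t hc
    rw [h2 _ hne] at this
    exact this
  have hconst2 := is_const_of_deriv_eq_zero
    (f := fun t : ℝ => F (p.1, ε * Real.exp t, p.2.2.1, 0, ε * Real.exp t * c))
    (fun t => (hδ t).differentiableAt) (fun t => (hδ t).deriv)
  have step2 := hconst2 (Real.log (ε * d)) 0
  simp only [Real.exp_log hp, Real.exp_zero] at step2
  have e1 : ε * (ε * d) = d := by rw [← mul_assoc, hε2, one_mul]
  have e3 : d * c = p.2.2.2.2 := by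
    rw [hcc]; field_simp
  simp only [e1, e3, mul_one] at step2
  rw [step1, step2]

/-- The invariants `I₁ = x`, `I₂ = x₋`, `I₃ = ẏ/(y − y₋)` are annihilated by the
prolongations of `X₁ = ∂_y` and `X₂ = y∂_y`; conversely any smooth function on the
jet space annihilated by both prolonged fields (where `y ≠ y₋`) is locally a
function of `I₁, I₂, I₃`. Coordinates: `q = (x, y, x₋, y₋, ẏ)`;
`pr X₁ = (0,1,0,1,0)`, `pr X₂ = (0, y, 0, y₋, ẏ)`. -/
theorem stmt_15
    (I₁ I₂ I₃ : ℝ × ℝ × ℝ × ℝ × ℝ → ℝ)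
    (hI₁ : I₁ = fun q => q.1) (hI₂ : I₂ = fun q => q.2.2.1)
    (hI₃ : I₃ = fun q => q.2.2.2.2 / (q.2.1 - q.2.2.2.1))
    (V₁ V₂ : ℝ × ℝ × ℝ × ℝ × ℝ → ℝ × ℝ × ℝ × ℝ × ℝ)
    (hV₁ : V₁ = fun _ => ((0 : ℝ), (1 : ℝ), (0 : ℝ), (1 : ℝ), (0 : ℝ)))
    (hV₂ : V₂ = fun q => ((0 : ℝ), q.2.1, (0 : ℝ), q.2.2.2.1, q.2.2.2.2)) :
    (∀ q : ℝ × ℝ × ℝ × ℝ × ℝ, q.2.1 ≠ q.2.2.2.1 →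
        fderiv ℝ I₁ q (V₁ q) = 0 ∧ fderiv ℝ I₁ q (V₂ q) = 0 ∧
        fderiv ℝ I₂ q (V₁ q) = 0 ∧ fderiv ℝ I₂ q (V₂ q) = 0 ∧
        fderiv ℝ I₃ q (V₁ q) = 0 ∧ fderiv ℝ I₃ q (V₂ q) = 0) ∧
      (∀ F : ℝ × ℝ × ℝ × ℝ × ℝ → ℝ, ContDiff ℝ (⊤ : ℕ∞) F →
        (∀ q : ℝ × ℝ × ℝ × ℝ × ℝ, q.2.1 ≠ q.2.2.2.1 →
          fderiv ℝ F q (V₁ q) = 0 ∧ fderiv ℝ F q (V₂ q) = 0) →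
        ∀ q : ℝ × ℝ × ℝ × ℝ × ℝ, q.2.1 ≠ q.2.2.2.1 →
          ∃ U ∈ nhds q, ∃ Φ : ℝ × ℝ × ℝ → ℝ,
            ∀ p ∈ U, F p = Φ (I₁ p, I₂ p, I₃ p)) := by
  subst hI₁ hI₂ hI₃ hV₁ hV₂
  constructor
  · intro q hq
    have hd : q.2.1 - q.2.2.2.1 ≠ 0 := sub_ne_zero.mpr hq
    have hx : HasFDerivAt (fun p : ℝ × ℝ × ℝ × ℝ × ℝ => p.1)
        (ContinuousLinearMap.fst ℝ ℝ (ℝ × ℝ × ℝ × ℝ)) q := hasFDerivAt_fst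
    have hy : HasFDerivAt (fun p : ℝ × ℝ × ℝ × ℝ × ℝ => p.2.1)
        ((ContinuousLinearMap.fst ℝ ℝ (ℝ × ℝ × ℝ)).comp
          (ContinuousLinearMap.snd ℝ ℝ (ℝ × ℝ × ℝ × ℝ))) q :=
      hasFDerivAt_fst.comp q hasFDerivAt_snd
    have hxm : HasFDerivAt (fun p : ℝ × ℝ × ℝ × ℝ × ℝ => p.2.2.1)
        ((ContinuousLinearMap.fst ℝ ℝ (ℝ × ℝ)).comp
          ((ContinuousLinearMap.snd ℝ ℝ (ℝ × ℝ × ℝ)).comp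
            (ContinuousLinearMap.snd ℝ ℝ (ℝ × ℝ × ℝ × ℝ)))) q :=
      hasFDerivAt_fst.comp q (hasFDerivAt_snd.comp q hasFDerivAt_snd)
    have hym : HasFDerivAt (fun p : ℝ × ℝ × ℝ × ℝ × ℝ => p.2.2.2.1)
        ((ContinuousLinearMap.fst ℝ ℝ ℝ).comp
          ((ContinuousLinearMap.snd ℝ ℝ (ℝ × ℝ)).comp
            ((ContinuousLinearMap.snd ℝ ℝ (ℝ × ℝ × ℝ)).comp
              (ContinuousLinearMap.snd ℝ ℝ (ℝ × ℝ × ℝ × ℝ))))) q :=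
      hasFDerivAt_fst.comp q (hasFDerivAt_snd.comp q (hasFDerivAt_snd.comp q hasFDerivAt_snd))
    have hyd : HasFDerivAt (fun p : ℝ × ℝ × ℝ × ℝ × ℝ => p.2.2.2.2)
        ((ContinuousLinearMap.snd ℝ ℝ ℝ).comp
          ((ContinuousLinearMap.snd ℝ ℝ (ℝ × ℝ)).comp
            ((ContinuousLinearMap.snd ℝ ℝ (ℝ × ℝ × ℝ)).comp
              (ContinuousLinearMap.snd ℝ ℝ (ℝ × ℝ × ℝ × ℝ))))) q :=
      hasFDerivAt_snd.comp q (hasFDerivAt_snd.comp q (hasFDerivAt_snd.comp q hasFDerivAt_snd))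
    have hinv : HasDerivAt (fun x : ℝ => x⁻¹) (-((q.2.1 - q.2.2.2.1) ^ 2)⁻¹)
        ((fun p : ℝ × ℝ × ℝ × ℝ × ℝ => p.2.1 - p.2.2.2.1) q) := hasDerivAt_inv hd
    have hcomp : HasFDerivAt (fun p : ℝ × ℝ × ℝ × ℝ × ℝ => (p.2.1 - p.2.2.2.1)⁻¹)
        (-((q.2.1 - q.2.2.2.1) ^ 2)⁻¹ •
          (((ContinuousLinearMap.fst ℝ ℝ (ℝ × ℝ × ℝ)).comp
              (ContinuousLinearMap.snd ℝ ℝ (ℝ × ℝ × ℝ × ℝ))) -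
            ((ContinuousLinearMap.fst ℝ ℝ ℝ).comp
              ((ContinuousLinearMap.snd ℝ ℝ (ℝ × ℝ)).comp
                ((ContinuousLinearMap.snd ℝ ℝ (ℝ × ℝ × ℝ)).comp
                  (ContinuousLinearMap.snd ℝ ℝ (ℝ × ℝ × ℝ × ℝ))))))) q :=
      hinv.comp_hasFDerivAt q (hy.sub hym)
    refine ⟨?_, ?_, ?_, ?_, ?_, ?_⟩
    · rw [hx.fderiv]; simp
    · rw [hx.fderiv]; simp
    · rw [hxm.fderiv]; simp
    · rw [hxm.fderiv]; simp
    · simp only [div_eq_mul_inv]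
      rw [(hyd.fun_mul hcomp).fderiv]
      simp
    · simp only [div_eq_mul_inv]
      rw [(hyd.fun_mul hcomp).fderiv]
      simp
      field_simp
      ring
  · intro F hF hFinv q hq
    have hFd : Differentiable ℝ F := hF.differentiable (by simp)
    have h1 : ∀ r : ℝ × ℝ × ℝ × ℝ × ℝ, r.2.1 ≠ r.2.2.2.1 →
        fderiv ℝ F r ((0 : ℝ), (1 : ℝ), (0 : ℝ), (1 : ℝ), (0 : ℝ)) = 0 :=
      fun r hr => (hFinv r hr).1
    have h2 : ∀ r : ℝ × ℝ × ℝ × ℝ × ℝ, r.2.1 ≠ r.2.2.2.1 →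
        fderiv ℝ F r ((0 : ℝ), r.2.1, (0 : ℝ), r.2.2.2.1, r.2.2.2.2) = 0 :=
      fun r hr => (hFinv r hr).2
    rcases (sub_ne_zero.mpr hq).lt_or_gt with h | h
    · -- negative case, ε = -1
      refine ⟨{p : ℝ × ℝ × ℝ × ℝ × ℝ | 0 < (-1 : ℝ) * (p.2.1 - p.2.2.2.1)}, ?_, ?_⟩
      · refine IsOpen.mem_nhds ?_ (by simpa using h)
        exact isOpen_lt continuous_const (by fun_prop)
      · refine ⟨fun t => F (t.1, -1, t.2.1, 0, (-1 : ℝ) * t.2.2), fun p hp => ?_⟩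
        exact key15 (-1) (Or.inr rfl) F hFd h1 h2 p hp
    · -- positive case, ε = 1
      refine ⟨{p : ℝ × ℝ × ℝ × ℝ × ℝ | 0 < (1 : ℝ) * (p.2.1 - p.2.2.2.1)}, ?_, ?_⟩
      · refine IsOpen.mem_nhds ?_ (by simpa using h)
        exact isOpen_lt continuous_const (by fun_prop)
      · refine ⟨fun t => F (t.1, 1, t.2.1, 0, (1 : ℝ) * t.2.2), fun p hp => ?_⟩
        exact key15 1 (Or.inl rfl) F hFd h1 h2 p hp
end

section
/- For the four-dimensional Lie algebra spanned by X₁ = ∂_x, X₂ = ∂_y, X₃ = x∂_x + y∂_y, X₄ = y∂_x − x∂_y, the function I(x, y, x_-, y_-, ẏ) = (ẏ − (y−y_-)/(x−x_-)) / (1 + ẏ·(y−y_-)/(x−x_-)) is annihilated by the prolongation of each Xᵢ on the open set where x ≠ x_- and the denominator is nonzero. -/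
set_option maxHeartbeats 1000000

noncomputable section
abbrev E5 := ℝ × ℝ × ℝ × ℝ × ℝ
open ContinuousLinearMap

def π1 : E5 →L[ℝ] ℝ := fst ℝ ℝ _
def π2 : E5 →L[ℝ] ℝ := (fst ℝ ℝ _).comp (snd ℝ ℝ _)
def π3 : E5 →L[ℝ] ℝ := ((fst ℝ ℝ _).comp (snd ℝ ℝ _)).comp (snd ℝ ℝ _)
def π4 : E5 →L[ℝ] ℝ := (((fst ℝ ℝ _).comp (snd ℝ ℝ _)).comp (snd ℝ ℝ _)).comp (snd ℝ ℝ _)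
def π5 : E5 →L[ℝ] ℝ := (((snd ℝ ℝ _).comp (snd ℝ ℝ _)).comp (snd ℝ ℝ _)).comp (snd ℝ ℝ _)


/-- For the algebra spanned by `X₁ = ∂_x`, `X₂ = ∂_y`, `X₃ = x∂_x + y∂_y`,
`X₄ = y∂_x − x∂_y`, the function
`I = (ẏ − (y−y₋)/(x−x₋)) / (1 + ẏ (y−y₋)/(x−x₋))` is annihilated by the
prolongation of each `Xᵢ` where `x ≠ x₋` and the denominator is nonzero.
Coordinates `q = (x, y, x₋, y₋, ẏ)`; `ζ = η_x + (η_y − ξ_x)ẏ − ξ_y ẏ²`. -/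
theorem stmt_16
    (I : ℝ × ℝ × ℝ × ℝ × ℝ → ℝ)
    (hI : I = fun q =>
      (q.2.2.2.2 - (q.2.1 - q.2.2.2.1) / (q.1 - q.2.2.1)) /
        (1 + q.2.2.2.2 * ((q.2.1 - q.2.2.2.1) / (q.1 - q.2.2.1))))
    (V₁ V₂ V₃ V₄ : ℝ × ℝ × ℝ × ℝ × ℝ → ℝ × ℝ × ℝ × ℝ × ℝ)
    (hV₁ : V₁ = fun _ => ((1 : ℝ), (0 : ℝ), (1 : ℝ), (0 : ℝ), (0 : ℝ)))
    (hV₂ : V₂ = fun _ => ((0 : ℝ), (1 : ℝ), (0 : ℝ), (1 : ℝ), (0 : ℝ)))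
    (hV₃ : V₃ = fun q => (q.1, q.2.1, q.2.2.1, q.2.2.2.1, (0 : ℝ)))
    (hV₄ : V₄ = fun q =>
      (q.2.1, -q.1, q.2.2.2.1, -q.2.2.1, -(1 + q.2.2.2.2 ^ 2))) :
    ∀ q : ℝ × ℝ × ℝ × ℝ × ℝ,
      q.1 ≠ q.2.2.1 →
      1 + q.2.2.2.2 * ((q.2.1 - q.2.2.2.1) / (q.1 - q.2.2.1)) ≠ 0 →
      fderiv ℝ I q (V₁ q) = 0 ∧ fderiv ℝ I q (V₂ q) = 0 ∧
        fderiv ℝ I q (V₃ q) = 0 ∧ fderiv ℝ I q (V₄ q) = 0 := by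
  intro q hx hden
  have hv0 : q.1 - q.2.2.1 ≠ 0 := sub_ne_zero.mpr hx
  have hc : (q.1 - q.2.2.1) + q.2.2.2.2 * (q.2.1 - q.2.2.2.1) ≠ 0 := by
    intro h
    apply hden
    field_simp
    linarith [h]
  have hu : HasFDerivAt (fun p : E5 => p.2.1 - p.2.2.2.1) (π2 - π4) q :=
    π2.hasFDerivAt.sub π4.hasFDerivAt
  have hv : HasFDerivAt (fun p : E5 => p.1 - p.2.2.1) (π1 - π3) q :=
    π1.hasFDerivAt.sub π3.hasFDerivAt
  have hvinv := (hasDerivAt_inv hv0).comp_hasFDerivAt q hv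
  have hr := hu.mul hvinv
  have hnum := π5.hasFDerivAt.sub hr
  have hdd := (hasFDerivAt_const (1:ℝ) q).add (π5.hasFDerivAt.mul hr)
  have hdval : (fun p : E5 => 1 + p.2.2.2.2 * ((fun p : E5 => p.2.1 - p.2.2.2.1) p * ((fun p : E5 => p.1 - p.2.2.1) p)⁻¹)) q ≠ 0 := by
    simpa [div_eq_mul_inv] using hden
  have hdinv := (hasDerivAt_inv hdval).comp_hasFDerivAt q hdd
  have hId := hnum.mul hdinv
  subst hI hV₁ hV₂ hV₃ hV₄
  have heq : (fun q : E5 =>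
      (q.2.2.2.2 - (q.2.1 - q.2.2.2.1) / (q.1 - q.2.2.1)) /
        (1 + q.2.2.2.2 * ((q.2.1 - q.2.2.2.1) / (q.1 - q.2.2.1)))) =
      fun p : E5 => (p.2.2.2.2 - (p.2.1 - p.2.2.2.1) * ((p.1 - p.2.2.1))⁻¹) *
        ((1 + p.2.2.2.2 * ((p.2.1 - p.2.2.2.1) * ((p.1 - p.2.2.1))⁻¹)))⁻¹ := by
    funext p; rw [div_eq_mul_inv, div_eq_mul_inv]
  have hfd : fderiv ℝ (fun p : E5 =>
      (p.2.2.2.2 - (p.2.1 - p.2.2.2.1) * ((p.1 - p.2.2.1))⁻¹) *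
        ((1 + p.2.2.2.2 * ((p.2.1 - p.2.2.2.1) * ((p.1 - p.2.2.1))⁻¹)))⁻¹) q = _ := hId.fderiv
  rw [heq, hfd]
  refine ⟨?_, ?_, ?_, ?_⟩ <;>
  · simp only [ContinuousLinearMap.smul_apply, ContinuousLinearMap.sub_apply,
      ContinuousLinearMap.add_apply, ContinuousLinearMap.zero_apply,
      ContinuousLinearMap.coe_comp', Function.comp_apply, π1, π2, π3, π4, π5,
      ContinuousLinearMap.coe_fst', ContinuousLinearMap.coe_snd', smul_eq_mul]
    obtain ⟨x, y, xm, ym, t⟩ := q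
    simp only [Pi.add_apply, Pi.mul_apply, Pi.sub_apply, Function.comp_apply] at hv0 hc hden ⊢
    have hD : (1 + t * ((y - ym) * (x - xm)⁻¹)) = (x - xm + t * (y - ym)) * (x - xm)⁻¹ := by
      field_simp
    rw [hD]
    field_simp
    try ring
end
end

section
/- Suppose a smooth vector field X = ξ(x,y)∂_x + η(x,y)∂_y is a symmetry of the linear delay system ẏ = α(x)y + β(x)y_- + γ(x), x_- = g(x), in the sense that the prolonged vector field annihilates both defining equations on their common solution manifold, where x, y, y_- are treated as independent. Then ξ depends only on x, ξ(g(x)) = g'(x)·ξ(x), and η is affine in y: η(x,y) = A(x)·y + B(x) with A(x) = ξ(x)α(x) + A₀ for some constant A₀. -/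
private lemma sliceX {f : ℝ × ℝ → ℝ} (hf : Differentiable ℝ f) (x y : ℝ) :
    HasDerivAt (fun t => f (t, y)) (fderiv ℝ f (x, y) (1, 0)) x :=
  (hf (x, y)).hasFDerivAt.comp_hasDerivAt x
    ((hasDerivAt_id x).prodMk (hasDerivAt_const x y))

private lemma sliceY {f : ℝ × ℝ → ℝ} (hf : Differentiable ℝ f) (x y : ℝ) :
    HasDerivAt (fun t => f (x, t)) (fderiv ℝ f (x, y) (0, 1)) y :=
  (hf (x, y)).hasFDerivAt.comp_hasDerivAt y
    ((hasDerivAt_const y x).prodMk (hasDerivAt_id y))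

/-- Determining equations for point symmetries `X = ξ∂_x + η∂_y` of the linear delay
system `ẏ = α(x)y + β(x)y₋ + γ(x)`, `x₋ = g(x)`: the invariance conditions (with
`x, y, y₋` independent) force `ξ` to depend only on `x`, to satisfy
`ξ(g(x)) = g'(x)ξ(x)`, and `η(x,y) = A(x)y + B(x)` with `A(x) = ξ(x)α(x) + A₀`. -/
theorem stmt_17 (I : Set ℝ) (hIopen : IsOpen I) (hIconv : Convex ℝ I)
    (hIne : I.Nonempty)
    (α β γ g : ℝ → ℝ) (hα : ContDiff ℝ (⊤ : ℕ∞) α) (hβ : ContDiff ℝ (⊤ : ℕ∞) β)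
    (hγ : ContDiff ℝ (⊤ : ℕ∞) γ) (hg : ContDiff ℝ (⊤ : ℕ∞) g)
    (hβne : ∀ x ∈ I, β x ≠ 0) (hgI : ∀ x ∈ I, g x ∈ I)
    (hglt : ∀ x ∈ I, g x < x) (hg' : ∀ x ∈ I, deriv g x ≠ 0)
    (ξ η : ℝ × ℝ → ℝ) (hξ : ContDiff ℝ (⊤ : ℕ∞) ξ) (hη : ContDiff ℝ (⊤ : ℕ∞) η)
    -- invariance of the delay relation: ξ(x₋, y₋) = g'(x) ξ(x, y)
    (h1 : ∀ x ∈ I, ∀ y ym : ℝ, ξ (g x, ym) = deriv g x * ξ (x, y))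
    -- invariance of the DODE on solutions (ẏ replaced by α y + β y₋ + γ):
    -- ζ = ξ (α' y + β' y₋ + γ') + α η + β η(x₋, y₋)
    (h2 : ∀ x ∈ I, ∀ y ym : ℝ,
      fderiv ℝ η (x, y) (1, 0)
        + (fderiv ℝ η (x, y) (0, 1) - fderiv ℝ ξ (x, y) (1, 0))
            * (α x * y + β x * ym + γ x)
        - fderiv ℝ ξ (x, y) (0, 1) * (α x * y + β x * ym + γ x) ^ 2
      = (deriv α x * y + deriv β x * ym + deriv γ x) * ξ (x, y)
        + α x * η (x, y) + β x * η (g x, ym)) :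
    (∀ x ∈ I, ∀ y₁ y₂ : ℝ, ξ (x, y₁) = ξ (x, y₂)) ∧
      (∀ x ∈ I, ξ (g x, 0) = deriv g x * ξ (x, 0)) ∧
      ∃ A B : ℝ → ℝ, ∃ A₀ : ℝ,
        (∀ x ∈ I, ∀ y : ℝ, η (x, y) = A x * y + B x) ∧
        (∀ x ∈ I, A x = ξ (x, 0) * α x + A₀) := by
  have hξd : Differentiable ℝ ξ := hξ.differentiable (by simp)
  have hηd : Differentiable ℝ η := hη.differentiable (by simp)
  have hαd : Differentiable ℝ α := hα.differentiable (by simp)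
  -- Part 1: ξ is independent of y on I
  have P1 : ∀ x ∈ I, ∀ y₁ y₂ : ℝ, ξ (x, y₁) = ξ (x, y₂) := by
    intro x hx y₁ y₂
    exact mul_left_cancel₀ (hg' x hx) ((h1 x hx y₁ 0).symm.trans (h1 x hx y₂ 0))
  have hξ0 : ∀ x ∈ I, ∀ y : ℝ, ξ (x, y) = ξ (x, 0) := fun x hx y => P1 x hx y 0
  -- ∂ξ/∂y = 0 on I × ℝ
  have hDyξ : ∀ x ∈ I, ∀ y : ℝ, fderiv ℝ ξ (x, y) (0, 1) = 0 := by
    intro x hx y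
    have h := sliceY hξd x y
    have hc : (fun t => ξ (x, t)) = fun _ => ξ (x, 0) := funext fun t => hξ0 x hx t
    rw [hc] at h
    exact h.unique (hasDerivAt_const y (ξ (x, 0)))
  -- ∂ξ/∂x is independent of y on I × ℝ
  have hDxξ : ∀ x ∈ I, ∀ y : ℝ, fderiv ℝ ξ (x, y) (1, 0) = fderiv ℝ ξ (x, 0) (1, 0) := by
    intro x hx y
    have hev : (fun t => ξ (t, y)) =ᶠ[nhds x] (fun t => ξ (t, 0)) := by
      filter_upwards [hIopen.mem_nhds hx] with t ht using hξ0 t ht y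
    calc fderiv ℝ ξ (x, y) (1, 0) = deriv (fun t => ξ (t, y)) x := (sliceX hξd x y).deriv.symm
      _ = deriv (fun t => ξ (t, 0)) x := hev.deriv_eq
      _ = fderiv ℝ ξ (x, 0) (1, 0) := (sliceX hξd x 0).deriv
  -- key relation from comparing ym = 1 and ym = 0 in h2
  have key : ∀ x ∈ I, ∀ y : ℝ,
      (fderiv ℝ η (x, y) (0, 1) - fderiv ℝ ξ (x, 0) (1, 0)) * β x
        = deriv β x * ξ (x, 0) + β x * (η (g x, 1) - η (g x, 0)) := by
    intro x hx y
    have e1 := h2 x hx y 1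
    have e0 := h2 x hx y 0
    rw [hDyξ x hx y, hDxξ x hx y, hξ0 x hx y] at e1 e0
    linear_combination e1 - e0
  -- ∂η/∂y is independent of y on I × ℝ
  have hDyη : ∀ x ∈ I, ∀ y : ℝ, fderiv ℝ η (x, y) (0, 1) = fderiv ℝ η (x, 0) (0, 1) := by
    intro x hx y
    have h := hβne x hx
    have e : fderiv ℝ η (x, y) (0, 1) * β x = fderiv ℝ η (x, 0) (0, 1) * β x := by
      linear_combination key x hx y - key x hx 0
    exact mul_right_cancel₀ h e
  -- η is affine in y on I × ℝ
  have hAff : ∀ x ∈ I, ∀ y : ℝ, η (x, y) = fderiv ℝ η (x, 0) (0, 1) * y + η (x, 0) := by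
    intro x hx y
    set c := fderiv ℝ η (x, 0) (0, 1) with hc
    have hf : ∀ t : ℝ, HasDerivAt (fun s => η (x, s) - c * s) 0 t := by
      intro t
      have h := sliceY hηd x t
      rw [hDyη x hx t] at h
      have h' := h.sub ((hasDerivAt_id t).const_mul c); rw [← hc, mul_one, sub_self] at h'; exact h'
    have hconst := is_const_of_deriv_eq_zero (fun t => (hf t).differentiableAt)
      (fun t => (hf t).deriv) y 0
    simp only [mul_zero, sub_zero] at hconst
    linarith [hconst]
  -- the slope function
  set Aslope : ℝ → ℝ := fun x => η (x, 1) - η (x, 0) with hAslopedef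
  have hAeq : ∀ x ∈ I, Aslope x = fderiv ℝ η (x, 0) (0, 1) := by
    intro x hx
    have := hAff x hx 1
    simp only [hAslopedef]
    linarith [this]
  -- derivative of Aslope on I
  have hH : ∀ x ∈ I,
      fderiv ℝ η (x, 1) (1, 0) - fderiv ℝ η (x, 0) (1, 0)
        = deriv α x * ξ (x, 0) + α x * fderiv ℝ ξ (x, 0) (1, 0) := by
    intro x hx
    have e1 := h2 x hx 1 0
    have e0 := h2 x hx 0 0
    rw [hDyξ x hx 1, hDxξ x hx 1, hξ0 x hx 1, hDyη x hx 1] at e1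
    rw [hDyξ x hx 0] at e0
    have hF1 : η (x, 1) = fderiv ℝ η (x, 0) (0, 1) * 1 + η (x, 0) := hAff x hx 1
    linear_combination e1 - e0 + α x * hF1
  -- Aslope - ξ(·,0)·α has zero derivative on I
  set φ : ℝ → ℝ := fun x => Aslope x - ξ (x, 0) * α x with hφdef
  have hφ' : ∀ x ∈ I, HasDerivWithinAt φ 0 I x := by
    intro x hx
    have hAslope : HasDerivAt Aslope (fderiv ℝ η (x, 1) (1, 0) - fderiv ℝ η (x, 0) (1, 0)) x :=
      (sliceX hηd x 1).sub (sliceX hηd x 0)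
    have hp : HasDerivAt (fun t => ξ (t, 0) * α t)
        (fderiv ℝ ξ (x, 0) (1, 0) * α x + ξ (x, 0) * deriv α x) x :=
      (sliceX hξd x 0).mul (hαd x).hasDerivAt
    have h := hAslope.sub hp
    have hz : fderiv ℝ η (x, 1) (1, 0) - fderiv ℝ η (x, 0) (1, 0)
        - (fderiv ℝ ξ (x, 0) (1, 0) * α x + ξ (x, 0) * deriv α x) = 0 := by
      have := hH x hx; linarith
    rw [hz] at h
    exact h.hasDerivWithinAt
  obtain ⟨x₀, hx₀⟩ := hIne
  have hφconst : ∀ x ∈ I, φ x = φ x₀ := by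
    intro x hx
    have hb := Convex.norm_image_sub_le_of_norm_hasDerivWithin_le
      (f' := fun _ => (0 : ℝ)) hφ' (fun y _ => by rw [norm_zero]) hIconv hx₀ hx
    simp only [zero_mul, norm_le_zero_iff, sub_eq_zero] at hb
    exact hb
  refine ⟨P1, fun x hx => h1 x hx 0 0, Aslope, fun x => η (x, 0), φ x₀, ?_, ?_⟩
  · intro x hx y
    rw [hAeq x hx]
    exact hAff x hx y
  · intro x hx
    have h := hφconst x hx
    simp only [hφdef] at h ⊢
    linarith
end

section
/- For the realization of so(3) by X₁ = (1+x²)∂_x + xy∂_y, X₂ = xy∂_x + (1+y²)∂_y, X₃ = y∂_x − x∂_y, the function J(x, y, x_-, y_-) = (x − x_-)²·(1 + ((y−y_-)/(x−x_-))² + (y − x·(y−y_-)/(x−x_-))²) / ((1+x²+y²)(1+x_-²+y_-²)) is annihilated by the prolongation of each Xᵢ to the variables (x, y, x_-, y_-), i.e., (ξᵢ∂_x + ηᵢ∂_y + ξᵢ(x_-,y_-)∂_{x_-} + ηᵢ(x_-,y_-)∂_{y_-})J = 0 on the open set x ≠ x_-. -/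
/-- The smooth (polynomial-quotient) extension of `J`. -/
private noncomputable def gfun : ℝ × ℝ × ℝ × ℝ → ℝ := fun p =>
  ((p.1 - p.2.2.1) ^ 2 + (p.2.1 - p.2.2.2) ^ 2 +
      (p.1 * p.2.2.2 - p.2.2.1 * p.2.1) ^ 2) /
    ((1 + p.1 ^ 2 + p.2.1 ^ 2) * (1 + p.2.2.1 ^ 2 + p.2.2.2 ^ 2))

private lemma aff (a b : ℝ) : HasDerivAt (fun t : ℝ => a + t * b) b 0 := by
  simpa using ((hasDerivAt_id (0 : ℝ)).mul_const b).const_add a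

/-- Key one-variable computation along an affine line. -/
private lemma key (x y u v p q r s : ℝ)
    (h : (2*(x-u)*(p-r) + 2*(y-v)*(q-s) + 2*(x*v-u*y)*(p*v+x*s-r*y-u*q)) *
          ((1+x^2+y^2)*(1+u^2+v^2))
       - ((x-u)^2+(y-v)^2+(x*v-u*y)^2) *
          ((2*x*p+2*y*q)*(1+u^2+v^2)+(1+x^2+y^2)*(2*u*r+2*v*s)) = 0) :
    HasDerivAt (fun t : ℝ =>
      ((x + t*p - (u + t*r)) ^ 2 + (y + t*q - (v + t*s)) ^ 2 +
          ((x + t*p) * (v + t*s) - (u + t*r) * (y + t*q)) ^ 2) /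
        ((1 + (x + t*p) ^ 2 + (y + t*q) ^ 2) *
          (1 + (u + t*r) ^ 2 + (v + t*s) ^ 2))) 0 0 := by
  have hN := ((((aff x p).sub (aff u r)).pow 2).add
      (((aff y q).sub (aff v s)).pow 2)).add
      ((((aff x p).mul (aff v s)).sub ((aff u r).mul (aff y q))).pow 2)
  have hD := ((((aff x p).pow 2).const_add 1).add ((aff y q).pow 2)).mul
      ((((aff u r).pow 2).const_add 1).add ((aff v s).pow 2))
  have hD0 : (1 + (x + 0*p) ^ 2 + (y + 0*q) ^ 2) *
      (1 + (u + 0*r) ^ 2 + (v + 0*s) ^ 2) ≠ 0 := by positivity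
  have := hN.div hD hD0
  refine this.congr_deriv ?_
  rw [div_eq_zero_iff]
  left
  simp only [Pi.add_apply, Pi.sub_apply, Pi.mul_apply, Pi.pow_apply]
  push_cast
  linear_combination h

private lemma line_deriv (g : ℝ × ℝ × ℝ × ℝ → ℝ) (q0 v : ℝ × ℝ × ℝ × ℝ)
    (hg : DifferentiableAt ℝ g q0) :
    HasDerivAt (fun t : ℝ => g (q0 + t • v)) (fderiv ℝ g q0 v) 0 := by
  have hline : HasDerivAt (fun t : ℝ => q0 + t • v) v 0 := by
    simpa using ((hasDerivAt_id (0 : ℝ)).smul_const v).const_add q0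
  exact (show HasFDerivAt g (fderiv ℝ g q0) (q0 + (0:ℝ) • v) by
    simpa using hg.hasFDerivAt).comp_hasDerivAt 0 hline

private lemma gfun_diff (q0 : ℝ × ℝ × ℝ × ℝ) : DifferentiableAt ℝ gfun q0 := by
  unfold gfun
  have h1 : DifferentiableAt ℝ (fun p : ℝ × ℝ × ℝ × ℝ =>
      (p.1 - p.2.2.1) ^ 2 + (p.2.1 - p.2.2.2) ^ 2 +
        (p.1 * p.2.2.2 - p.2.2.1 * p.2.1) ^ 2) q0 := by fun_prop
  have h2 : DifferentiableAt ℝ (fun p : ℝ × ℝ × ℝ × ℝ =>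
      (1 + p.1 ^ 2 + p.2.1 ^ 2) * (1 + p.2.2.1 ^ 2 + p.2.2.2 ^ 2)) q0 := by fun_prop
  have h3 : DifferentiableAt ℝ (fun p : ℝ × ℝ × ℝ × ℝ =>
      ((1 + p.1 ^ 2 + p.2.1 ^ 2) * (1 + p.2.2.1 ^ 2 + p.2.2.2 ^ 2))⁻¹) q0 :=
    h2.inv (by positivity)
  simpa [div_eq_mul_inv] using h1.fun_mul h3

private lemma fderiv_gfun_eq_zero (q0 v : ℝ × ℝ × ℝ × ℝ)
    (h : (2*(q0.1-q0.2.2.1)*(v.1-v.2.2.1) + 2*(q0.2.1-q0.2.2.2)*(v.2.1-v.2.2.2)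
          + 2*(q0.1*q0.2.2.2-q0.2.2.1*q0.2.1)*
            (v.1*q0.2.2.2+q0.1*v.2.2.2-v.2.2.1*q0.2.1-q0.2.2.1*v.2.1)) *
          ((1+q0.1^2+q0.2.1^2)*(1+q0.2.2.1^2+q0.2.2.2^2))
       - ((q0.1-q0.2.2.1)^2+(q0.2.1-q0.2.2.2)^2+(q0.1*q0.2.2.2-q0.2.2.1*q0.2.1)^2) *
          ((2*q0.1*v.1+2*q0.2.1*v.2.1)*(1+q0.2.2.1^2+q0.2.2.2^2)
            +(1+q0.1^2+q0.2.1^2)*(2*q0.2.2.1*v.2.2.1+2*q0.2.2.2*v.2.2.2)) = 0) :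
    fderiv ℝ gfun q0 v = 0 := by
  have h1 := line_deriv gfun q0 v (gfun_diff q0)
  have h2 := key q0.1 q0.2.1 q0.2.2.1 q0.2.2.2 v.1 v.2.1 v.2.2.1 v.2.2.2 h
  have he : (fun t : ℝ => gfun (q0 + t • v)) = (fun t : ℝ =>
      ((q0.1 + t*v.1 - (q0.2.2.1 + t*v.2.2.1)) ^ 2
        + (q0.2.1 + t*v.2.1 - (q0.2.2.2 + t*v.2.2.2)) ^ 2 +
          ((q0.1 + t*v.1) * (q0.2.2.2 + t*v.2.2.2)
            - (q0.2.2.1 + t*v.2.2.1) * (q0.2.1 + t*v.2.1)) ^ 2) /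
        ((1 + (q0.1 + t*v.1) ^ 2 + (q0.2.1 + t*v.2.1) ^ 2) *
          (1 + (q0.2.2.1 + t*v.2.2.1) ^ 2 + (q0.2.2.2 + t*v.2.2.2) ^ 2))) := by
    funext t
    simp [gfun, Prod.fst_add, Prod.snd_add, Prod.smul_fst, Prod.smul_snd, smul_eq_mul]
  rw [he] at h1
  exact h1.unique h2

/-- For the o(3) realization `X₁ = (1+x²)∂_x + xy∂_y`, `X₂ = xy∂_x + (1+y²)∂_y`,
`X₃ = y∂_x − x∂_y`, the function
`J = (x−x₋)² (1 + ((y−y₋)/(x−x₋))² + (y − x(y−y₋)/(x−x₋))²) / ((1+x²+y²)(1+x₋²+y₋²))`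
is annihilated by the prolongation of each `Xᵢ` to `(x, y, x₋, y₋)` where `x ≠ x₋`.
Coordinates `q = (x, y, x₋, y₋)`. -/
theorem stmt_19
    (J : ℝ × ℝ × ℝ × ℝ → ℝ)
    (hJ : J = fun q =>
      (q.1 - q.2.2.1) ^ 2 *
        (1 + ((q.2.1 - q.2.2.2) / (q.1 - q.2.2.1)) ^ 2 +
          (q.2.1 - q.1 * ((q.2.1 - q.2.2.2) / (q.1 - q.2.2.1))) ^ 2) /
      ((1 + q.1 ^ 2 + q.2.1 ^ 2) * (1 + q.2.2.1 ^ 2 + q.2.2.2 ^ 2)))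
    (V₁ V₂ V₃ : ℝ × ℝ × ℝ × ℝ → ℝ × ℝ × ℝ × ℝ)
    (hV₁ : V₁ = fun q =>
      (1 + q.1 ^ 2, q.1 * q.2.1, 1 + q.2.2.1 ^ 2, q.2.2.1 * q.2.2.2))
    (hV₂ : V₂ = fun q =>
      (q.1 * q.2.1, 1 + q.2.1 ^ 2, q.2.2.1 * q.2.2.2, 1 + q.2.2.2 ^ 2))
    (hV₃ : V₃ = fun q => (q.2.1, -q.1, q.2.2.2, -q.2.2.1)) :
    ∀ q : ℝ × ℝ × ℝ × ℝ, q.1 ≠ q.2.2.1 →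
      fderiv ℝ J q (V₁ q) = 0 ∧ fderiv ℝ J q (V₂ q) = 0 ∧
        fderiv ℝ J q (V₃ q) = 0 := by
  intro q hq
  have hJg : J =ᶠ[nhds q] gfun := by
    have hc : Continuous fun p : ℝ × ℝ × ℝ × ℝ => p.1 - p.2.2.1 := by fun_prop
    have hopen : IsOpen {p : ℝ × ℝ × ℝ × ℝ | p.1 - p.2.2.1 ≠ 0} :=
      isOpen_compl_singleton.preimage hc
    have hmem : q ∈ {p : ℝ × ℝ × ℝ × ℝ | p.1 - p.2.2.1 ≠ 0} := sub_ne_zero.mpr hq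
    filter_upwards [hopen.mem_nhds hmem] with p hp
    have h0 : p.1 - p.2.2.1 ≠ 0 := hp
    have h1 : (1 + p.1 ^ 2 + p.2.1 ^ 2) * (1 + p.2.2.1 ^ 2 + p.2.2.2 ^ 2) ≠ 0 := by
      positivity
    rw [hJ]
    simp only [gfun]
    field_simp
    ring
  have hfd : fderiv ℝ J q = fderiv ℝ gfun q := hJg.fderiv_eq
  rw [hfd, hV₁, hV₂, hV₃]
  refine ⟨?_, ?_, ?_⟩ <;> [skip; skip; skip] <;>
    · apply fderiv_gfun_eq_zero
      ring
end
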